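/- Let n ≥ 1 and R ≥ 0, and let S ⊆ ℝⁿ be a nonempty set with 0 ∈ S and ‖v‖₂ ≤ √n for all v ∈ S. Suppose that for every ε > 0 the set S admits an ε-cover (with respect to the Euclidean norm) of cardinality at most exp(R/ε²). Then the empirical Rademacher complexity satisfies R̂(S) ≤ 4/n^{3/2} + (18/n)·√R·log n. -/

import Mathlib

/-!
Dudley chaining at the dyadic scales `εⱼ = √n / 2 ^ j`. Starting from the trivial cover `{0}` at
scale `√n`, every `v ∈ S` is a telescoping sum of links `cⱼ₊₁ v - cⱼ v` between points of
consecutive covers, plus a remainder of norm at most `εₘ`. The links of level `j` have norm at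
most `3 εⱼ₊₁` and there are at most `exp (2 R / εⱼ₊₁ ^ 2)` of them, so Massart's finite class lemma
(Hoeffding's bound `𝔼 exp (t ⟨σ, d⟩) ≤ exp (t ^ 2 ‖d‖ ^ 2 / 2)` combined with Jensen) bounds the
expected largest link of every level by `6 √R`. With `m = ⌊log₂ n²⌋` levels the remainder
contributes at most `1 / 2 ^ m ≤ 2 / n ^ 2` and the links at most `6 m √R / n ≤ 18 √R log n / n`.
-/

/-- The empirical Rademacher complexity of a set `S ⊆ ℝⁿ`:
`R̂(S) = 2^{-n} Σ_{σ ∈ {-1,1}ⁿ} sup_{v ∈ S} (1/n) Σ_i σ_i v_i`. -/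
noncomputable def empRad {n : ℕ} (S : Set (Fin n → ℝ)) : ℝ :=
  (1 / 2 ^ n) * ∑ ε : Fin n → Bool,
    sSup ((fun v : Fin n → ℝ =>
      (1 / (n : ℝ)) * ∑ i, (if ε i then (1 : ℝ) else -1) * v i) '' S)

/-- The Euclidean norm on `ℝⁿ`. -/
noncomputable def euclNorm {n : ℕ} (v : Fin n → ℝ) : ℝ :=
  Real.sqrt (∑ i, (v i) ^ 2)

open Finset Real
open scoped BigOperators

def signVec {n : ℕ} (σ : Fin n → Bool) : Fin n → ℝ := fun i => if σ i then 1 else -1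

lemma signVec_sq {n : ℕ} (σ : Fin n → Bool) (i : Fin n) : signVec σ i ^ 2 = 1 := by
  unfold signVec; split_ifs <;> norm_num

lemma euclNorm_eq_norm {n : ℕ} (v : Fin n → ℝ) : euclNorm v = ‖WithLp.toLp 2 v‖ := by
  simp [euclNorm, EuclideanSpace.norm_eq]

lemma euclNorm_sub_le {n : ℕ} (a b v : Fin n → ℝ) :
    euclNorm (a - b) ≤ euclNorm (v - a) + euclNorm (v - b) := by
  simp only [euclNorm_eq_norm, WithLp.toLp_sub]
  rw [norm_sub_rev _ (WithLp.toLp 2 a)]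
  exact norm_sub_le_norm_sub_add_norm_sub _ _ _

lemma signVec_dotProduct_le {n : ℕ} (σ : Fin n → Bool) (w : Fin n → ℝ) :
    signVec σ ⬝ᵥ w ≤ √n * euclNorm w := by
  have h := real_inner_le_norm (WithLp.toLp 2 (signVec σ)) (WithLp.toLp 2 w)
  have hs : euclNorm (signVec σ) = √n := by simp [euclNorm, signVec_sq]
  rw [← euclNorm_eq_norm, ← euclNorm_eq_norm, hs] at h
  simpa [PiLp.inner_apply, dotProduct, mul_comm] using h

lemma exp_expect_le_expect_exp {ι : Type*} {s : Finset ι} (hs : s.Nonempty) (f : ι → ℝ) :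
    exp (𝔼 i ∈ s, f i) ≤ 𝔼 i ∈ s, exp (f i) := by
  have hw : ∑ _i ∈ s, (#s : ℝ)⁻¹ = 1 := by
    rw [sum_const, nsmul_eq_mul, mul_inv_cancel₀ (by exact_mod_cast hs.card_pos.ne')]
  have := convexOn_exp.map_sum_le (t := s) (p := f) (fun _ _ => by positivity) hw
    (fun _ _ => Set.mem_univ _)
  simpa [expect_eq_sum_div_card, div_eq_inv_mul, mul_sum] using this

lemma expect_exp_mul_signVec_dotProduct_le {n : ℕ} (t : ℝ) (d : Fin n → ℝ) :
    𝔼 σ, exp (t * (signVec σ ⬝ᵥ d)) ≤ exp (t ^ 2 * euclNorm d ^ 2 / 2) := by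
  have hprod : ∑ σ : Fin n → Bool, exp (t * (signVec σ ⬝ᵥ d)) = ∏ i, 2 * cosh (t * d i) := by
    simp_rw [dotProduct, signVec, mul_sum, exp_sum]
    rw [← Fintype.prod_sum (κ := fun _ => Bool)
      (fun i b => exp (t * ((if b then 1 else -1) * d i)))]
    refine prod_congr rfl fun i _ => ?_
    rw [Fintype.sum_bool, cosh_eq]
    simp only [↓reduceIte, Bool.false_eq_true, one_mul, neg_one_mul, mul_neg]
    ring
  have hnorm : euclNorm d ^ 2 = ∑ i, d i ^ 2 := sq_sqrt (sum_nonneg fun i _ => sq_nonneg _)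
  calc 𝔼 σ, exp (t * (signVec σ ⬝ᵥ d))
      = ∏ i, cosh (t * d i) := by
        rw [Fintype.expect_eq_sum_div_card, hprod, prod_mul_distrib, prod_const, card_univ]
        simp
    _ ≤ ∏ i, exp ((t * d i) ^ 2 / 2) :=
        prod_le_prod (fun i _ => (cosh_pos _).le) fun i _ => cosh_le_exp_half_sq _
    _ = exp (t ^ 2 * euclNorm d ^ 2 / 2) := by
        rw [← exp_sum, hnorm, mul_sum, sum_div]
        simp_rw [mul_pow]

lemma le_mul_sqrt_of_forall_mul_le {x a B : ℝ} (ha : 0 ≤ a) (hB : 0 ≤ B)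
    (h : ∀ t > 0, t * x ≤ a + t ^ 2 * B ^ 2 / 2) : x ≤ B * √(2 * a) := by
  rcases le_or_gt x 0 with hx | hx
  · exact hx.trans (by positivity)
  have hB0 : 0 < B := by
    refine hB.lt_of_ne' fun hB0 => ?_
    have := h ((a + 1) / x) (by positivity)
    rw [hB0, div_mul_cancel₀ _ hx.ne'] at this
    linarith
  have hx2 := h (x / B ^ 2) (by positivity)
  rw [← sqrt_sq hB, ← sqrt_mul (sq_nonneg B), le_sqrt hx.le (by positivity)]
  field_simp at hx2
  nlinarith

lemma expect_sup'_signVec_dotProduct_le {n : ℕ} {ι : Type*} {s : Finset ι} (hs : s.Nonempty)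
    (f : ι → Fin n → ℝ) {B : ℝ} (hB : ∀ i ∈ s, euclNorm (f i) ≤ B) :
    𝔼 σ, s.sup' hs (fun i => signVec σ ⬝ᵥ f i) ≤ B * √(2 * log #s) := by
  have hB0 : 0 ≤ B := (sqrt_nonneg _).trans (hB _ hs.choose_spec)
  refine le_mul_sqrt_of_forall_mul_le (log_natCast_nonneg _) hB0 fun t ht => ?_
  have hcard : (0 : ℝ) < #s := by exact_mod_cast hs.card_pos
  rw [← exp_le_exp, exp_add, exp_log hcard, mul_expect]
  calc exp (𝔼 σ, t * s.sup' hs (fun i => signVec σ ⬝ᵥ f i))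
      ≤ 𝔼 σ, exp (t * s.sup' hs (fun i => signVec σ ⬝ᵥ f i)) :=
        exp_expect_le_expect_exp univ_nonempty _
    _ ≤ 𝔼 σ, ∑ i ∈ s, exp (t * (signVec σ ⬝ᵥ f i)) := by
        refine expect_le_expect fun σ _ => ?_
        obtain ⟨i, hi, hmax⟩ := exists_mem_eq_sup' hs fun i => signVec σ ⬝ᵥ f i
        rw [hmax]
        exact single_le_sum (f := fun j => exp (t * (signVec σ ⬝ᵥ f j)))
          (fun j _ => (exp_pos _).le) hi
    _ = ∑ i ∈ s, 𝔼 σ, exp (t * (signVec σ ⬝ᵥ f i)) := expect_sum_comm _ _ _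
    _ ≤ ∑ _i ∈ s, exp (t ^ 2 * B ^ 2 / 2) := by
        refine sum_le_sum fun i hi => (expect_exp_mul_signVec_dotProduct_le t (f i)).trans ?_
        gcongr
        · exact sqrt_nonneg _
        · exact hB i hi
    _ = #s * exp (t ^ 2 * B ^ 2 / 2) := by rw [sum_const, nsmul_eq_mul]

lemma empRad_eq_expect {n : ℕ} (S : Set (Fin n → ℝ)) :
    empRad S = 𝔼 σ, sSup ((fun v => 1 / (n : ℝ) * (signVec σ ⬝ᵥ v)) '' S) := by
  rw [empRad, Fintype.expect_eq_sum_div_card, one_div_mul_eq_div]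
  simp only [Fintype.card_fun, Fintype.card_bool, Fintype.card_fin, Nat.cast_pow, Nat.cast_ofNat]
  rfl

lemma signVec_dotProduct_le_chain {n : ℕ} (σ : Fin n → Bool) (v : Fin n → ℝ)
    {c : ℕ → Fin n → ℝ} (hc : c 0 = 0) (m : ℕ) :
    signVec σ ⬝ᵥ v ≤ √n * euclNorm (v - c m) + ∑ j ∈ range m, signVec σ ⬝ᵥ (c (j + 1) - c j) := by
  have htelescope : ∑ j ∈ range m, signVec σ ⬝ᵥ (c (j + 1) - c j) = signVec σ ⬝ᵥ c m := by
    simp_rw [dotProduct_sub]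
    rw [sum_range_sub (fun j => signVec σ ⬝ᵥ c j), hc, dotProduct_zero, sub_zero]
  have := signVec_dotProduct_le σ (v - c m)
  rw [dotProduct_sub] at this
  linarith

theorem empRad_le_chaining {n : ℕ} {S : Set (Fin n → ℝ)} (hS : S.Nonempty)
    (T : ℕ → Finset (Fin n → ℝ)) (ε N : ℕ → ℝ) (hT₀ : T 0 = {0})
    (hcard : ∀ j, (#(T j) : ℝ) ≤ N j)
    (hcover : ∀ j, ∀ v ∈ S, ∃ t ∈ T j, euclNorm (v - t) ≤ ε j) (m : ℕ) :
    empRad S ≤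
      (√n * ε m + ∑ j ∈ range m, (ε j + ε (j + 1)) * √(2 * log (N (j + 1) * N j))) / n := by
  choose c hc_mem hc_dist using hcover
  set L : ℕ → Finset ((Fin n → ℝ) × (Fin n → ℝ)) := fun j =>
    (T (j + 1) ×ˢ T j).filter fun p => euclNorm (p.1 - p.2) ≤ ε j + ε (j + 1)
  have hlink : ∀ j v (hv : v ∈ S), (c (j + 1) v hv, c j v hv) ∈ L j := fun j v hv =>
    mem_filter.2 ⟨mem_product.2 ⟨hc_mem _ _ _, hc_mem _ _ _⟩,
      (euclNorm_sub_le _ _ v).trans (add_comm (ε j) _ ▸ add_le_add (hc_dist _ _ _) (hc_dist _ _ _))⟩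
  have hL : ∀ j, (L j).Nonempty := fun j => ⟨_, hlink j _ hS.some_mem⟩
  set X : ℕ → (Fin n → Bool) → ℝ := fun j σ => (L j).sup' (hL j) fun p => signVec σ ⬝ᵥ (p.1 - p.2)
  have hpointwise : ∀ σ, ∀ v ∈ S, signVec σ ⬝ᵥ v ≤ √n * ε m + ∑ j ∈ range m, X j σ := by
    intro σ v hv
    refine (signVec_dotProduct_le_chain σ v (c := fun j => c j v hv)
      (mem_singleton.1 (hT₀ ▸ hc_mem 0 v hv)) m).trans ?_
    gcongr with j
    · exact hc_dist m v hv
    · exact le_sup' (fun p => signVec σ ⬝ᵥ (p.1 - p.2)) (hlink j v hv)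
  have hlevel : ∀ j, 𝔼 σ, X j σ ≤ (ε j + ε (j + 1)) * √(2 * log (N (j + 1) * N j)) := by
    intro j
    refine (expect_sup'_signVec_dotProduct_le (hL j) _ fun p hp => (mem_filter.1 hp).2).trans ?_
    have hε : 0 ≤ ε j + ε (j + 1) := (sqrt_nonneg _).trans (mem_filter.1 (hL j).choose_spec).2
    have hLcard : (#(L j) : ℝ) ≤ N (j + 1) * N j := calc
      (#(L j) : ℝ) ≤ #(T (j + 1)) * #(T j) := by
        exact_mod_cast (card_filter_le _ _).trans (card_product _ _).le
      _ ≤ N (j + 1) * N j :=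
        mul_le_mul (hcard _) (hcard _) (by positivity) ((Nat.cast_nonneg _).trans (hcard _))
    gcongr
  rw [empRad_eq_expect]
  calc 𝔼 σ, sSup ((fun v => 1 / (n : ℝ) * (signVec σ ⬝ᵥ v)) '' S)
      ≤ 𝔼 σ, (√n * ε m + ∑ j ∈ range m, X j σ) / n := by
        refine expect_le_expect fun σ _ => csSup_le (hS.image _) ?_
        rintro _ ⟨v, hv, rfl⟩
        dsimp only
        rw [one_div_mul_eq_div]
        gcongr
        exact hpointwise σ v hv
    _ = (√n * ε m + ∑ j ∈ range m, 𝔼 σ, X j σ) / n := by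
        rw [← expect_div, expect_add_distrib, Fintype.expect_const, expect_sum_comm]
    _ ≤ _ := by
        gcongr with j
        exact hlevel j

theorem empRad_le_dyadic_chaining {n : ℕ} (hn : 0 < n) {R : ℝ} (hR : 0 ≤ R)
    {S : Set (Fin n → ℝ)} (hS : S.Nonempty) (hbound : ∀ v ∈ S, euclNorm v ≤ √n)
    (hcov : ∀ ε : ℝ, 0 < ε → ∃ T : Finset (Fin n → ℝ),
      (#T : ℝ) ≤ exp (R / ε ^ 2) ∧ ∀ v ∈ S, ∃ t ∈ T, euclNorm (v - t) ≤ ε) (m : ℕ) :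
    empRad S ≤ 1 / 2 ^ m + 6 * m * √R / n := by
  obtain ⟨ε, hε_def⟩ : ∃ ε : ℕ → ℝ, ε = fun j => √n / 2 ^ j := ⟨_, rfl⟩
  have hε : ∀ j, 0 < ε j := fun j => by rw [hε_def]; positivity
  have hε_succ : ∀ j, ε j = 2 * ε (j + 1) := fun j => by
    simp only [hε_def, pow_succ]; field_simp
  choose T hT_card hT_cover using fun j => hcov (ε (j + 1)) (hε _)
  let T' : ℕ → Finset (Fin n → ℝ) := fun j => Nat.casesOn j {0} T
  have hcard : ∀ j, (#(T' j) : ℝ) ≤ exp (R / ε j ^ 2) := by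
    rintro (_ | j)
    · simpa [T'] using one_le_exp (by positivity)
    · exact hT_card j
  have hcover : ∀ j, ∀ v ∈ S, ∃ t ∈ T' j, euclNorm (v - t) ≤ ε j := by
    rintro (_ | j) v hv
    · exact ⟨0, mem_singleton_self _, by simpa [hε_def] using hbound v hv⟩
    · exact hT_cover j v hv
  have hlevel : ∀ j, (ε j + ε (j + 1)) *
      √(2 * log (exp (R / ε (j + 1) ^ 2) * exp (R / ε j ^ 2))) ≤ 6 * √R := by
    intro j
    have hδ := hε (j + 1)
    have hsqrt : √(2 * log (exp (R / ε (j + 1) ^ 2) * exp (R / ε j ^ 2))) ≤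
        2 * √R / ε (j + 1) := by
      rw [← exp_add, log_exp, hε_succ j, sqrt_le_iff, div_pow (2 * √R), mul_pow 2 √R, sq_sqrt hR]
      refine ⟨by positivity, ?_⟩
      field_simp
      nlinarith
    calc _ ≤ (ε j + ε (j + 1)) * (2 * √R / ε (j + 1)) := by gcongr; linarith [hε j]
      _ = 6 * √R := by rw [hε_succ j]; field_simp; ring
  calc empRad S ≤ (√n * ε m + ∑ j ∈ range m, (ε j + ε (j + 1)) *
        √(2 * log (exp (R / ε (j + 1) ^ 2) * exp (R / ε j ^ 2)))) / n :=
        empRad_le_chaining hS T' ε _ rfl hcard hcover m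
    _ ≤ (√n * ε m + ∑ _j ∈ range m, 6 * √R) / n := by
        gcongr (_ + ?_) / _
        exact sum_le_sum fun j _ => hlevel j
    _ = 1 / 2 ^ m + 6 * m * √R / n := by
        have : (0 : ℝ) < n := by exact_mod_cast hn
        rw [sum_const, card_range, nsmul_eq_mul, hε_def]
        field_simp
        rw [sq_sqrt this.le]

lemma one_div_two_pow_log_sq_le {n : ℕ} (hn : 0 < n) :
    1 / 2 ^ Nat.log 2 (n ^ 2) ≤ 4 / (n : ℝ) ^ ((3 : ℝ) / 2) := by
  have hlt : (n : ℝ) ^ 2 < 2 ^ (Nat.log 2 (n ^ 2) + 1) := by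
    exact_mod_cast Nat.lt_pow_succ_log_self one_lt_two _
  have hrpow : (n : ℝ) ^ ((3 : ℝ) / 2) ≤ (n : ℝ) ^ 2 := by
    simpa using rpow_le_rpow_of_exponent_le (by exact_mod_cast hn : (1 : ℝ) ≤ n)
      (by norm_num : (3 : ℝ) / 2 ≤ 2)
  rw [pow_succ 2 (Nat.log 2 (n ^ 2))] at hlt
  rw [div_le_div_iff₀ (by positivity) (by positivity)]
  linarith [pow_pos (two_pos (α := ℝ)) (Nat.log 2 (n ^ 2))]

lemma natLog_two_sq_le {n : ℕ} (hn : 0 < n) : (Nat.log 2 (n ^ 2) : ℝ) ≤ 3 * log n := by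
  have hle : (2 : ℝ) ^ Nat.log 2 (n ^ 2) ≤ (n : ℝ) ^ 2 := by
    exact_mod_cast Nat.pow_log_le_self 2 (by positivity)
  have hlog := log_le_log (by positivity) hle
  rw [log_pow, log_pow, Nat.cast_ofNat] at hlog
  have hn1 : (1 : ℝ) ≤ n := by exact_mod_cast hn
  nlinarith [log_two_gt_d9, log_nonneg hn1, Nat.cast_nonneg (α := ℝ) (Nat.log 2 (n ^ 2))]

theorem rademacher_bound_from_covering_general {n : ℕ} (hn : 1 ≤ n) (R : ℝ) (hR : 0 ≤ R)
    (S : Set (Fin n → ℝ)) (hS : S.Nonempty)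
    (hbound : ∀ v ∈ S, euclNorm v ≤ Real.sqrt n)
    (hcov : ∀ ε : ℝ, 0 < ε → ∃ T : Finset (Fin n → ℝ),
      (T.card : ℝ) ≤ Real.exp (R / ε ^ 2) ∧ ∀ v ∈ S, ∃ t ∈ T, euclNorm (v - t) ≤ ε) :
    empRad S ≤ 4 / (n : ℝ) ^ ((3 : ℝ) / 2) + (18 / n) * Real.sqrt R * Real.log n := by
  refine (empRad_le_dyadic_chaining hn hR hS hbound hcov (Nat.log 2 (n ^ 2))).trans
    (add_le_add (one_div_two_pow_log_sq_le hn) ?_)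
  calc 6 * (Nat.log 2 (n ^ 2) : ℝ) * √R / n ≤ 6 * (3 * log n) * √R / n := by
        gcongr
        exact natLog_two_sq_le hn
    _ = 18 / n * √R * log n := by ring

/-- If `S ⊆ ℝⁿ` is nonempty with `0 ∈ S` and `‖v‖₂ ≤ √n` for all
`v ∈ S`, and for every `ε > 0` the set `S` admits an `ε`-cover of cardinality at most
`exp(R/ε²)`, then `R̂(S) ≤ 4/n^{3/2} + (18/n)·√R·log n`. -/
theorem rademacher_bound_from_covering {n : ℕ} (hn : 1 ≤ n) (R : ℝ) (hR : 0 ≤ R)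
    (S : Set (Fin n → ℝ)) (hS : S.Nonempty) (h0 : (0 : Fin n → ℝ) ∈ S)
    (hbound : ∀ v ∈ S, euclNorm v ≤ Real.sqrt n)
    (hcov : ∀ ε : ℝ, 0 < ε → ∃ T : Finset (Fin n → ℝ),
      (T.card : ℝ) ≤ Real.exp (R / ε ^ 2) ∧ ∀ v ∈ S, ∃ t ∈ T, euclNorm (v - t) ≤ ε) :
    empRad S ≤ 4 / (n : ℝ) ^ ((3 : ℝ) / 2) + (18 / n) * Real.sqrt R * Real.log n :=
  rademacher_bound_from_covering_general hn R hR S hS hbound hcov
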